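/- arXiv:1206.1919 — 3 statements merged into one kernel-verified Lean document; each statement's English description precedes it below -/
import Mathlib

section
/- For every nonempty noncrossing chord system S there exist a chord (a,b) ∈ S and a natural number x with a < x < b such that x is not an endpoint of any chord of S. (This is the existence, used in the shelling procedure computing a cylindric canonical ordering, of a free vertex strictly between the endpoints of an innermost chord of the current boundary cycle.) -/
/-- A chord `(a,b)` joins two non-adjacent positions: `a + 2 ≤ b`. -/
def IsChordSystem (S : Finset (ℕ × ℕ)) : Prop :=
  ∀ c ∈ S, c.1 + 2 ≤ c.2

/-- Two chords `(a,b)` and `(c,d)` cross if `a < c < b < d` or `c < a < d < b`. -/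
def ChordsCross (c d : ℕ × ℕ) : Prop :=
  (c.1 < d.1 ∧ d.1 < c.2 ∧ c.2 < d.2) ∨ (d.1 < c.1 ∧ c.1 < d.2 ∧ d.2 < c.2)

/-- A chord system is noncrossing if no two of its chords cross. -/
def Noncrossing (S : Finset (ℕ × ℕ)) : Prop :=
  ∀ c ∈ S, ∀ d ∈ S, ¬ ChordsCross c d

/-- `x` is an endpoint of the chord system `S`. -/
def IsEndpoint (S : Finset (ℕ × ℕ)) (x : ℕ) : Prop :=
  ∃ y, (x, y) ∈ S ∨ (y, x) ∈ S

/-! A shortest chord `(a, b)` is innermost: no chord can start at `a + 1` without being shorter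
or crossing `(a, b)`, and none can end there without crossing it, so `a + 1` is free. -/

section

variable {S : Finset (ℕ × ℕ)} {c : ℕ × ℕ}

theorem notMem_of_fst_eq_succ_of_shortest (hS : IsChordSystem S) (hnc : Noncrossing S)
    (hc : c ∈ S) (hmin : ∀ d ∈ S, c.2 - c.1 ≤ d.2 - d.1) (y : ℕ) : (c.1 + 1, y) ∉ S := by
  intro hy
  have hc₂ := hS c hc
  have hy₂ := hS _ hy
  have hlen := hmin _ hy
  have hcross := hnc c hc _ hy
  simp only [ChordsCross] at hcross
  omega

theorem notMem_of_snd_eq_succ (hS : IsChordSystem S) (hnc : Noncrossing S) (hc : c ∈ S)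
    (hlt : c.1 + 1 < c.2) (y : ℕ) : (y, c.1 + 1) ∉ S := by
  intro hy
  have hy₂ := hS _ hy
  have hcross := hnc c hc _ hy
  simp only [ChordsCross] at hcross
  omega

end

/-- In every nonempty noncrossing chord system there is a chord `(a,b)` and a
position `x` strictly between `a` and `b` that is an endpoint of no chord. -/
theorem exists_free_position_of_noncrossing (S : Finset (ℕ × ℕ))
    (hchord : IsChordSystem S) (hnc : Noncrossing S) (hne : S.Nonempty) :
    ∃ c ∈ S, ∃ x : ℕ, c.1 < x ∧ x < c.2 ∧ ¬ IsEndpoint S x := by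
  obtain ⟨c, hc, hmin⟩ := S.exists_min_image (fun c => c.2 - c.1) hne
  have hlt : c.1 + 1 < c.2 := by have := hchord c hc; omega
  refine ⟨c, hc, c.1 + 1, Nat.lt_add_one _, hlt, ?_⟩
  rintro ⟨y, hy | hy⟩
  · exact notMem_of_fst_eq_succ_of_shortest hchord hnc hc hmin y hy
  · exact notMem_of_snd_eq_succ hchord hnc hc hlt y hy
end

section
/- Let m ≥ 1 and let p₀, …, p_m be an x-monotone chain in ℝ² whose every edge has slope of absolute value at most 1, with strict inequality for the first edge [p₀,p₁] and the last edge [p_{m−1},p_m]. Let v be the unique point with y(v) − y(p₀) = x(v) − x(p₀) and y(v) − y(p_m) = x(p_m) − x(v) (the apex of the wedge formed by the ray of slope +1 from p₀ and the ray of slope −1 from p_m). Then v does not lie on the body of the chain, y(v) > y(p_i) for every 0 ≤ i ≤ m, for each 0 ≤ i ≤ m the closed segment [v, p_i] intersects the body of the chain exactly in the single point p_i, and for i ≠ j the segments [v, p_i] and [v, p_j] meet only at the point v. (This is the geometric fact guaranteeing that, in the incremental drawing algorithm, after the two strip insertions make the slopes of e_ℓ and e_r strictly smaller than 1 in absolute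 value, the new vertex v_k and its edges to the consecutive neighbours on the upper boundary can be drawn in a planar way.) -/
/-!
Measure a point `x` against the apex `v` by its vertical gaps `gapPlus v x` and `gapMinus v x` to
the lines of slope `1` and `-1` through `v`. An edge of slope at most `1` in absolute value does not
decrease `gapPlus` and does not increase `gapMinus`; as `gapPlus` vanishes at `p₀`, `gapMinus` at
`pₘ`, and the end edges are strict, `gapPlus > 0` off `p₀` and `gapMinus > 0` off `pₘ`. So the chain
lies strictly below `v`, and `2 (a - v) × (b - v) = gapPlus b * gapMinus a - gapPlus a * gapMinus b`
shows that every edge turns counterclockwise around `v`. Hence the direction seen from `v` moves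
strictly monotonically along the body: distinct vertices lie on distinct rays from `v`, and the ray
through `pᵢ` meets the body only at `pᵢ`.
-/

namespace ChainApex

variable (v : ℝ × ℝ)

def depth (x : ℝ × ℝ) : ℝ := v.2 - x.2

def gapPlus (x : ℝ × ℝ) : ℝ := v.2 - x.2 + (x.1 - v.1)

def gapMinus (x : ℝ × ℝ) : ℝ := v.2 - x.2 - (x.1 - v.1)

/-- The abscissa, relative to `v`, at which the ray from `v` through `x` crosses the horizontal
line one unit below `v`; for points below `v` it determines the ray. -/
noncomputable def rayCoord (x : ℝ × ℝ) : ℝ := (x.1 - v.1) / depth v x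

/-- The cross product `(a - v) × (b - v)`. -/
def cross (a b : ℝ × ℝ) : ℝ := (b.1 - v.1) * depth v a - (a.1 - v.1) * depth v b

variable {v}

theorem depth_self : depth v v = 0 := sub_self _

theorem two_mul_depth (x : ℝ × ℝ) : 2 * depth v x = gapPlus v x + gapMinus v x := by
  unfold depth gapPlus gapMinus; ring

theorem two_mul_cross (a b : ℝ × ℝ) :
    2 * cross v a b = gapPlus v b * gapMinus v a - gapPlus v a * gapMinus v b := by
  unfold cross depth gapPlus gapMinus; ring

theorem gapPlus_le_gapPlus {a b : ℝ × ℝ} (h : |b.2 - a.2| ≤ b.1 - a.1) :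
    gapPlus v a ≤ gapPlus v b := by
  unfold gapPlus; linarith [le_abs_self (b.2 - a.2)]

theorem gapPlus_lt_gapPlus {a b : ℝ × ℝ} (h : |b.2 - a.2| < b.1 - a.1) :
    gapPlus v a < gapPlus v b := by
  unfold gapPlus; linarith [le_abs_self (b.2 - a.2)]

theorem gapMinus_le_gapMinus {a b : ℝ × ℝ} (h : |b.2 - a.2| ≤ b.1 - a.1) :
    gapMinus v b ≤ gapMinus v a := by
  unfold gapMinus; linarith [neg_abs_le (b.2 - a.2)]

theorem gapMinus_lt_gapMinus {a b : ℝ × ℝ} (h : |b.2 - a.2| < b.1 - a.1) :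
    gapMinus v b < gapMinus v a := by
  unfold gapMinus; linarith [neg_abs_le (b.2 - a.2)]

theorem rayCoord_lt_rayCoord_iff {a b : ℝ × ℝ} (ha : 0 < depth v a) (hb : 0 < depth v b) :
    rayCoord v a < rayCoord v b ↔ 0 < cross v a b := by
  rw [rayCoord, rayCoord, div_lt_div_iff₀ ha hb, cross, sub_pos]

theorem cross_pos_of_gapPlus_eq_zero {a b : ℝ × ℝ} (ha : gapPlus v a = 0)
    (hb : 0 < gapPlus v b) (ha' : 0 < gapMinus v a) : 0 < cross v a b := by
  have h := two_mul_cross (v := v) a b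
  rw [ha, zero_mul, sub_zero] at h
  linarith [mul_pos hb ha']

theorem cross_pos_of_abs_sub_le {a b : ℝ × ℝ} (hLa : 0 < gapPlus v a) (hRa : 0 < gapMinus v a)
    (hx : a.1 < b.1) (hs : |b.2 - a.2| ≤ b.1 - a.1) : 0 < cross v a b := by
  have hL := sub_nonneg.2 (gapPlus_le_gapPlus (v := v) hs)
  have hR := sub_nonneg.2 (gapMinus_le_gapMinus (v := v) hs)
  have hsum : gapPlus v b - gapPlus v a + (gapMinus v a - gapMinus v b) = 2 * (b.1 - a.1) := by
    unfold gapPlus gapMinus; ring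
  have hsplit : 2 * cross v a b = (gapPlus v b - gapPlus v a) * gapMinus v a
      + gapPlus v a * (gapMinus v a - gapMinus v b) := by
    rw [two_mul_cross]; ring
  have hc : 0 < min (gapPlus v a) (gapMinus v a) := lt_min hLa hRa
  nlinarith [mul_le_mul_of_nonneg_left (min_le_right (gapPlus v a) (gapMinus v a)) hL,
    mul_le_mul_of_nonneg_right (min_le_left (gapPlus v a) (gapMinus v a)) hR,
    mul_pos hc (sub_pos.2 hx)]

theorem cross_add_smul_sub_right (a b : ℝ × ℝ) (t : ℝ) :
    cross v a (a + t • (b - a)) = t * cross v a b := by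
  simp only [cross, depth, Prod.fst_add, Prod.snd_add, Prod.smul_fst, Prod.smul_snd,
    Prod.fst_sub, Prod.snd_sub, smul_eq_mul]
  ring

theorem cross_add_smul_sub_left (a b : ℝ × ℝ) (t : ℝ) :
    cross v (a + t • (b - a)) b = (1 - t) * cross v a b := by
  simp only [cross, depth, Prod.fst_add, Prod.snd_add, Prod.smul_fst, Prod.smul_snd,
    Prod.fst_sub, Prod.snd_sub, smul_eq_mul]
  ring

theorem depth_pos_of_mem_segment {a b x : ℝ × ℝ} (ha : 0 < depth v a) (hb : 0 < depth v b)
    (hx : x ∈ segment ℝ a b) : 0 < depth v x := by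
  have hconv := convex_halfSpace_lt (LinearMap.snd ℝ ℝ ℝ).isLinear v.2
  exact sub_pos.2 (hconv.segment_subset (sub_pos.1 ha) (sub_pos.1 hb) hx)

theorem eq_or_eq_or_rayCoord_mem_Ioo_of_mem_segment {a b x : ℝ × ℝ} (ha : 0 < depth v a)
    (hb : 0 < depth v b) (hab : rayCoord v a < rayCoord v b) (hx : x ∈ segment ℝ a b) :
    x = a ∨ x = b ∨ rayCoord v x ∈ Set.Ioo (rayCoord v a) (rayCoord v b) := by
  have hxd := depth_pos_of_mem_segment ha hb hx
  rw [segment_eq_image'] at hx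
  obtain ⟨t, ⟨ht0, ht1⟩, rfl⟩ := hx
  rw [rayCoord_lt_rayCoord_iff ha hb] at hab
  rcases ht0.eq_or_lt with rfl | ht0
  · simp
  rcases ht1.eq_or_lt with rfl | ht1
  · simp
  refine Or.inr (Or.inr ⟨(rayCoord_lt_rayCoord_iff ha hxd).2 ?_,
    (rayCoord_lt_rayCoord_iff hxd hb).2 ?_⟩)
  · rw [cross_add_smul_sub_right]; exact mul_pos ht0 hab
  · rw [cross_add_smul_sub_left]; exact mul_pos (sub_pos.2 ht1) hab

theorem rayCoord_eq_of_mem_segment {a x : ℝ × ℝ} (hx : x ∈ segment ℝ v a) (hxv : x ≠ v) :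
    rayCoord v x = rayCoord v a := by
  rw [segment_eq_image'] at hx
  obtain ⟨t, -, rfl⟩ := hx
  have ht : t ≠ 0 := by rintro rfl; simp at hxv
  simp only [rayCoord, depth, Prod.fst_add, Prod.snd_add, Prod.smul_fst, Prod.smul_snd,
    Prod.fst_sub, Prod.snd_sub, smul_eq_mul, add_sub_cancel_left, sub_add_eq_sub_sub, sub_self,
    zero_sub, ← mul_neg, neg_sub, mul_div_mul_left _ _ ht]

theorem segment_inter_segment_eq_singleton {a b : ℝ × ℝ} (h : rayCoord v a ≠ rayCoord v b) :
    segment ℝ v a ∩ segment ℝ v b = {v} := by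
  refine Set.eq_singleton_iff_unique_mem.2
    ⟨⟨left_mem_segment ℝ v a, left_mem_segment ℝ v b⟩, fun x ⟨hxa, hxb⟩ => ?_⟩
  by_contra hxv
  exact h ((rayCoord_eq_of_mem_segment hxa hxv).symm.trans (rayCoord_eq_of_mem_segment hxb hxv))

section Chain

variable {m : ℕ} {p : Fin (m + 1) → ℝ × ℝ}

theorem monotone_gapPlus
    (hslope : ∀ i : Fin m,
      |(p i.succ).2 - (p i.castSucc).2| ≤ (p i.succ).1 - (p i.castSucc).1) :
    Monotone fun i => gapPlus v (p i) :=
  Fin.monotone_iff_le_succ.2 fun i => gapPlus_le_gapPlus (hslope i)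

theorem antitone_gapMinus
    (hslope : ∀ i : Fin m,
      |(p i.succ).2 - (p i.castSucc).2| ≤ (p i.succ).1 - (p i.castSucc).1) :
    Antitone fun i => gapMinus v (p i) :=
  Fin.antitone_iff_succ_le.2 fun i => gapMinus_le_gapMinus (hslope i)

theorem gapPlus_pos_of_ne_zero (hm : 0 < m)
    (hslope : ∀ i : Fin m,
      |(p i.succ).2 - (p i.castSucc).2| ≤ (p i.succ).1 - (p i.castSucc).1)
    (hfirst : |(p (⟨0, hm⟩ : Fin m).succ).2 - (p (⟨0, hm⟩ : Fin m).castSucc).2|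
      < (p (⟨0, hm⟩ : Fin m).succ).1 - (p (⟨0, hm⟩ : Fin m).castSucc).1)
    (hL0 : gapPlus v (p 0) = 0) : ∀ i ≠ 0, 0 < gapPlus v (p i) := fun i hi =>
  (hL0.symm.trans_lt (gapPlus_lt_gapPlus hfirst)).trans_le <| monotone_gapPlus hslope <| by
    rw [Fin.le_def, Fin.val_succ]; exact Fin.pos_iff_ne_zero.2 hi

theorem gapMinus_pos_of_ne_last (hm : 0 < m)
    (hslope : ∀ i : Fin m,
      |(p i.succ).2 - (p i.castSucc).2| ≤ (p i.succ).1 - (p i.castSucc).1)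
    (hlast : |(p (⟨m - 1, by omega⟩ : Fin m).succ).2 - (p (⟨m - 1, by omega⟩ : Fin m).castSucc).2|
      < (p (⟨m - 1, by omega⟩ : Fin m).succ).1 - (p (⟨m - 1, by omega⟩ : Fin m).castSucc).1)
    (hRlast : gapMinus v (p (Fin.last m)) = 0) : ∀ i ≠ Fin.last m, 0 < gapMinus v (p i) := by
  intro i hi
  have hsucc : (⟨m - 1, by omega⟩ : Fin m).succ = Fin.last m := Fin.ext (by simp; omega)
  rw [hsucc] at hlast
  refine (hRlast.symm.trans_lt (gapMinus_lt_gapMinus hlast)).trans_le <| antitone_gapMinus hslope ?_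
  rw [Fin.le_def, Fin.val_castSucc]
  exact Nat.le_sub_one_of_lt (Fin.val_lt_last hi)

theorem depth_pos (hm : 0 < m)
    (hslope : ∀ i : Fin m,
      |(p i.succ).2 - (p i.castSucc).2| ≤ (p i.succ).1 - (p i.castSucc).1)
    (hL0 : gapPlus v (p 0) = 0) (hRlast : gapMinus v (p (Fin.last m)) = 0)
    (hLpos : ∀ i ≠ 0, 0 < gapPlus v (p i)) (hRpos : ∀ i ≠ Fin.last m, 0 < gapMinus v (p i))
    (i : Fin (m + 1)) : 0 < depth v (p i) := by
  have hL : 0 ≤ gapPlus v (p i) := hL0 ▸ monotone_gapPlus hslope (Fin.zero_le i)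
  have hR : 0 ≤ gapMinus v (p i) := hRlast ▸ antitone_gapMinus hslope (Fin.le_last i)
  have hsum : 0 < gapPlus v (p i) + gapMinus v (p i) := by
    rcases eq_or_ne i 0 with rfl | hi
    · exact add_pos_of_nonneg_of_pos hL (hRpos 0 (Fin.castSucc_ne_last ⟨0, hm⟩))
    · exact add_pos_of_pos_of_nonneg (hLpos i hi) hR
  linarith [two_mul_depth (v := v) (p i)]

theorem strictMono_rayCoord
    (hmono : ∀ i : Fin m, (p i.castSucc).1 < (p i.succ).1)
    (hslope : ∀ i : Fin m,
      |(p i.succ).2 - (p i.castSucc).2| ≤ (p i.succ).1 - (p i.castSucc).1)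
    (hL0 : gapPlus v (p 0) = 0) (hLpos : ∀ i ≠ 0, 0 < gapPlus v (p i))
    (hRpos : ∀ i ≠ Fin.last m, 0 < gapMinus v (p i)) (hdepth : ∀ i, 0 < depth v (p i)) :
    StrictMono fun i => rayCoord v (p i) := by
  refine Fin.strictMono_iff_lt_succ.2 fun j => (rayCoord_lt_rayCoord_iff (hdepth _) (hdepth _)).2 ?_
  have hR : 0 < gapMinus v (p j.castSucc) := hRpos _ (Fin.castSucc_ne_last j)
  by_cases hj : j.castSucc = 0
  · exact cross_pos_of_gapPlus_eq_zero (hj ▸ hL0) (hLpos _ (Fin.succ_ne_zero j)) hR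
  · exact cross_pos_of_abs_sub_le (hLpos _ hj) hR (hmono j) (hslope j)

theorem exists_vertex_mem_edge (hm : 0 < m) (i : Fin (m + 1)) :
    ∃ j : Fin m, p i ∈ segment ℝ (p j.castSucc) (p j.succ) := by
  rcases Fin.eq_zero_or_eq_succ i with rfl | ⟨j, rfl⟩
  · exact ⟨⟨0, hm⟩, left_mem_segment ℝ _ _⟩
  · exact ⟨j, right_mem_segment ℝ _ _⟩

theorem eq_of_mem_edge_of_rayCoord_eq (hdepth : ∀ i, 0 < depth v (p i))
    (hray : StrictMono fun i => rayCoord v (p i)) {j : Fin m} {x : ℝ × ℝ}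
    (hx : x ∈ segment ℝ (p j.castSucc) (p j.succ)) {i : Fin (m + 1)}
    (hxi : rayCoord v x = rayCoord v (p i)) : x = p i := by
  rcases eq_or_eq_or_rayCoord_mem_Ioo_of_mem_segment (hdepth _) (hdepth _)
      (hray (Fin.castSucc_lt_succ (i := j))) hx with rfl | rfl | ⟨hlt, hgt⟩
  · rw [hray.injective (hxi.symm.trans rfl)]
  · rw [hray.injective (hxi.symm.trans rfl)]
  · rw [hxi] at hlt hgt
    have h1 := hray.lt_iff_lt.1 hlt
    have h2 := hray.lt_iff_lt.1 hgt
    rw [Fin.lt_def, Fin.val_castSucc] at h1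
    rw [Fin.lt_def, Fin.val_succ] at h2
    omega

end Chain

end ChainApex

open ChainApex

/-- The apex `v` of the wedge formed by the ray of slope `+1` from the first
point and the ray of slope `−1` from the last point of an x-monotone chain
whose edges have slopes of absolute value at most `1` (strictly for the first
and last edges) lies strictly above the chain, off its body, and the segments
from `v` to the chain vertices meet the body only at those vertices and
pairwise meet only at `v`. -/
theorem apex_sees_chain (m : ℕ) (hm : 1 ≤ m) (p : Fin (m + 1) → ℝ × ℝ)
    (hmono : ∀ i : Fin m, (p i.castSucc).1 < (p i.succ).1)
    (hslope : ∀ i : Fin m,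
      |(p i.succ).2 - (p i.castSucc).2| ≤ (p i.succ).1 - (p i.castSucc).1)
    (hfirst : |(p (⟨0, by omega⟩ : Fin m).succ).2 - (p (⟨0, by omega⟩ : Fin m).castSucc).2|
      < (p (⟨0, by omega⟩ : Fin m).succ).1 - (p (⟨0, by omega⟩ : Fin m).castSucc).1)
    (hlast : |(p (⟨m - 1, by omega⟩ : Fin m).succ).2 - (p (⟨m - 1, by omega⟩ : Fin m).castSucc).2|
      < (p (⟨m - 1, by omega⟩ : Fin m).succ).1 - (p (⟨m - 1, by omega⟩ : Fin m).castSucc).1)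
    (v : ℝ × ℝ)
    (hva : v.2 - (p 0).2 = v.1 - (p 0).1)
    (hvb : v.2 - (p (Fin.last m)).2 = (p (Fin.last m)).1 - v.1) :
    v ∉ (⋃ i : Fin m, segment ℝ (p i.castSucc) (p i.succ)) ∧
    (∀ i : Fin (m + 1), (p i).2 < v.2) ∧
    (∀ i : Fin (m + 1),
      segment ℝ v (p i) ∩ (⋃ j : Fin m, segment ℝ (p j.castSucc) (p j.succ)) = {p i}) ∧
    (∀ i j : Fin (m + 1), i ≠ j →
      segment ℝ v (p i) ∩ segment ℝ v (p j) = {v}) := by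
  have hL0 : gapPlus v (p 0) = 0 := by unfold gapPlus; linarith
  have hRlast : gapMinus v (p (Fin.last m)) = 0 := by unfold gapMinus; linarith
  have hLpos := gapPlus_pos_of_ne_zero hm hslope hfirst hL0
  have hRpos := gapMinus_pos_of_ne_last hm hslope hlast hRlast
  have hdepth := depth_pos hm hslope hL0 hRlast hLpos hRpos
  have hray := strictMono_rayCoord hmono hslope hL0 hLpos hRpos hdepth
  have hbody : ∀ x ∈ ⋃ j : Fin m, segment ℝ (p j.castSucc) (p j.succ), 0 < depth v x := by
    simp only [Set.mem_iUnion]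
    rintro x ⟨j, hx⟩
    exact depth_pos_of_mem_segment (hdepth _) (hdepth _) hx
  refine ⟨fun hv => (hbody v hv).ne' depth_self, fun i => sub_pos.1 (hdepth i), fun i => ?_,
    fun i j hij => segment_inter_segment_eq_singleton (hray.injective.ne hij)⟩
  refine Set.eq_singleton_iff_unique_mem.2
    ⟨⟨right_mem_segment ℝ v (p i), Set.mem_iUnion.2 (exists_vertex_mem_edge hm i)⟩, ?_⟩
  rintro x ⟨hxi, hx⟩
  obtain ⟨j, hxj⟩ := Set.mem_iUnion.1 hx
  have hxv : x ≠ v := fun h => (hbody x hx).ne' (h ▸ depth_self)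
  exact eq_of_mem_edge_of_rayCoord_eq hdepth hray hxj (rayCoord_eq_of_mem_segment hxi hxv)
end

section
/- Let k ≥ 1, let d : ZMod k → ℝ be a nonnegative function with total sum w, and let y : ZMod k → ℝ satisfy |y(i+1) − y(i)| ≤ d(i) for every i ∈ ZMod k. Then (max over i of y(i)) − (min over i of y(i)) ≤ w/2. (Applied to the cycle C(B₂) drawn on the x-periodic grid of width w, whose edges have slopes at most 1 in absolute value — so the vertical variation along each edge is at most its x-span, and the x-spans sum to w — this is the paper's claim that the vertical span of C(B₂) is at most w/2 ≤ n, used to prove the height bound h ≤ n(2d+1) in Proposition 1.) -/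
/-! The points `a`, `b` where `y` attains its maximum and minimum cut the cycle into two arcs, from
`b` to `a` and from `a` back to `b`. Along each arc, `y` changes by at most the sum of `d` over it, so
`y a - y b` is bounded by both arc sums, and these add up to `w`. -/

open Finset

theorem ZMod.sum_range_natCast {M : Type*} [AddCommMonoid M] (k : ℕ) [NeZero k] (f : ZMod k → M) :
    ∑ t ∈ range k, f t = ∑ i, f i := by
  obtain ⟨n, rfl⟩ := Nat.exists_eq_succ_of_ne_zero (NeZero.ne k)
  rw [← Fin.sum_univ_eq_sum_range]
  exact Fintype.sum_congr _ _ fun i => congrArg f (Fin.cast_val_eq_self i)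

theorem ZMod.sum_range_add_natCast {M : Type*} [AddCommMonoid M] (k : ℕ) [NeZero k]
    (f : ZMod k → M) (b : ZMod k) :
    ∑ t ∈ range k, f (b + t) = ∑ i, f i := by
  rw [ZMod.sum_range_natCast k (fun i => f (b + i))]
  exact Equiv.sum_comp (Equiv.addLeft b) f

theorem abs_sub_le_sum_range_of_abs_sub_succ_le {G : Type*} [AddMonoidWithOne G] {d y : G → ℝ}
    (hy : ∀ i, |y (i + 1) - y i| ≤ d i) (i : G) (n : ℕ) :
    |y (i + n) - y i| ≤ ∑ t ∈ range n, d (i + t) := by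
  induction n with
  | zero => simp
  | succ n ih =>
    rw [sum_range_succ, Nat.cast_succ, ← add_assoc]
    exact (abs_sub_le _ _ _).trans (by linarith [hy (i + n)])

theorem ZMod.two_mul_sub_le_sum_of_abs_sub_succ_le {k : ℕ} [NeZero k] {d y : ZMod k → ℝ}
    (hy : ∀ i, |y (i + 1) - y i| ≤ d i) (a b : ZMod k) :
    2 * (y a - y b) ≤ ∑ i, d i := by
  set m := (a - b).val
  have hm : m ≤ k := (ZMod.val_lt _).le
  have hba : b + m = a := by simp [m]
  have hab : a + ((k - m : ℕ) : ZMod k) = b := by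
    rw [Nat.cast_sub hm, ZMod.natCast_self, ← hba]; ring
  have up := abs_sub_le_sum_range_of_abs_sub_succ_le hy b m
  have down := abs_sub_le_sum_range_of_abs_sub_succ_le hy a (k - m)
  rw [hba] at up
  rw [hab] at down
  calc 2 * (y a - y b) ≤ |y a - y b| + |y b - y a| := by
        linarith [le_abs_self (y a - y b), neg_abs_le (y b - y a)]
    _ ≤ ∑ t ∈ range m, d (b + t) + ∑ t ∈ range (k - m), d (a + t) := add_le_add up down
    _ = ∑ t ∈ range k, d (b + t) := by
        have split := sum_range_add (fun t : ℕ => d (b + t)) m (k - m)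
        simp only [Nat.add_sub_cancel' hm, Nat.cast_add, ← add_assoc, hba] at split
        exact split.symm
    _ = ∑ i, d i := ZMod.sum_range_add_natCast k d b

theorem cyclic_variation_le_half_width_general (k : ℕ) [NeZero k]
    (d y : ZMod k → ℝ) (w : ℝ)
    (hw : ∑ i, d i = w)
    (hy : ∀ i : ZMod k, |y (i + 1) - y i| ≤ d i) :
    Finset.univ.sup' ⟨0, Finset.mem_univ 0⟩ y
      - Finset.univ.inf' ⟨0, Finset.mem_univ 0⟩ y ≤ w / 2 := by
  obtain ⟨a, -, ha⟩ := exists_mem_eq_sup' ⟨(0 : ZMod k), mem_univ 0⟩ y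
  obtain ⟨b, -, hb⟩ := exists_mem_eq_inf' ⟨(0 : ZMod k), mem_univ 0⟩ y
  rw [ha, hb]
  linarith [ZMod.two_mul_sub_le_sum_of_abs_sub_succ_le hy a b]

/-- If `d : ZMod k → ℝ` is nonnegative with total sum `w` and the cyclic sequence
`y : ZMod k → ℝ` satisfies `|y (i+1) - y i| ≤ d i` for all `i`, then the total
vertical variation of `y` is at most `w / 2`. -/
theorem cyclic_variation_le_half_width (k : ℕ) (hk : 1 ≤ k) [NeZero k]
    (d y : ZMod k → ℝ) (w : ℝ)
    (hd : ∀ i, 0 ≤ d i) (hw : ∑ i, d i = w)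
    (hy : ∀ i : ZMod k, |y (i + 1) - y i| ≤ d i) :
    Finset.univ.sup' ⟨0, Finset.mem_univ 0⟩ y
      - Finset.univ.inf' ⟨0, Finset.mem_univ 0⟩ y ≤ w / 2 :=
  cyclic_variation_le_half_width_general k d y w hw hy
end
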